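/- arXiv:1003.2179 — 3 statements merged into one kernel-verified Lean document; each statement's English description precedes it below -/
import Mathlib

section
/- Let μ₁(u),…,μ_m(u) ∈ 1 + u⁻¹ℂ[[u⁻¹]]. If μ₁(−u) ⇒ μ₁(u) → μ₂(u) → ⋯ → μ_m(u), then there exists an even power series γ(u) ∈ 1 + u⁻²ℂ[[u⁻²]] such that γ(u)μ_i(u) is a polynomial in u⁻¹ for every i = 1,…,m. -/
open PowerSeries Polynomial

noncomputable section

abbrev PS := PowerSeries ℂ

/-- `f ∈ 1 + u⁻¹ℂ[[u⁻¹]]`, with `X` playing the role of `u⁻¹`. -/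
def One1 (f : PS) : Prop := PowerSeries.constantCoeff f = 1

/-- `f ∈ 1 + u⁻²ℂ[[u⁻²]]`: an even power series with constant term 1. -/
def EvenOne (f : PS) : Prop := One1 f ∧ ∀ n, Odd n → PowerSeries.coeff n f = 0

/-- `u^{-deg P}·P(u)` viewed as a power series in `X = u⁻¹`. -/
def lowerP (P : Polynomial ℂ) : PS := (P.reverse : PowerSeries ℂ)

/-- `f → g`: there is a monic `P` with `f/g = P(u+1)/P(u)`. -/
def Arrow (f g : PS) : Prop :=
  ∃ P : Polynomial ℂ, P.Monic ∧ f * lowerP P = g * lowerP (P.comp (Polynomial.X + 1))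

/-- `f ⇒ g`: there is a monic `P` of even degree with `P(u) = P(1−u)` and
`f/g = P(u+1)/P(u)`. -/
def DArrow (f g : PS) : Prop :=
  ∃ P : Polynomial ℂ, P.Monic ∧ Even P.natDegree ∧ P.comp (1 - Polynomial.X) = P ∧
    f * lowerP P = g * lowerP (P.comp (Polynomial.X + 1))

/-- `f(−u)`, i.e. `u⁻¹ ↦ −u⁻¹`. -/
def negU (f : PS) : PS := PowerSeries.rescale (-1) f

/-- the factor `1 + a·u⁻¹`. -/
def linF (a : ℂ) : PS := 1 + PowerSeries.C a * PowerSeries.X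

/-- `f` is a polynomial in `u⁻¹`. -/
def IsPolyPS (f : PS) : Prop := ∃ Q : Polynomial ℂ, (Q : PS) = f

/-- `z ∈ ℤ_{≥0}` (so `a ≥ b` iff `IsNonnegInt (a - b)`). -/
def IsNonnegInt (z : ℂ) : Prop := ∃ n : ℕ, z = n

/-!
Since `P(1−u) = P(u)` and `deg P` is even, `u ↦ −u` sends `u^{-deg P}P(u)` to
`u^{-deg P}P(u+1)`, so `μ₁(−u) ⇒ μ₁(u)` says that `g = μ₁(u)·u^{-deg P}P(u+1)` is even.
Along the chain, `μ_i/μ₁ = A_i/D` for polynomials `A_i`, `D` in `u⁻¹` with one common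
denominator, `D(0) = 1`. Then `γ = u^{-deg P}P(u)·D(u)·D(−u)/μ₁(u)` makes every `γ·μ_i` a
polynomial, and `γ·g = F(u)F(−u)` with `F = u^{-deg P}P(u)·D(u)` is even, hence so is `γ`.
-/

lemma Polynomial.coeff_comp_neg_X {R : Type*} [CommRing R] (P : R[X]) (n : ℕ) :
    (P.comp (-X)).coeff n = (-1) ^ n * P.coeff n := by
  rw [← neg_one_mul, ← C_1, ← C_neg, comp_C_mul_X_coeff, mul_comm]

lemma Polynomial.reverse_comp_neg_X {R : Type*} [CommRing R] {P : R[X]}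
    (heven : Even P.natDegree) : (P.comp (-X)).reverse = P.reverse.comp (-X) := by
  have hdeg : (P.comp (-X)).natDegree = P.natDegree := natDegree_eq_of_degree_eq degree_comp_neg_X
  ext n
  rw [coeff_reverse, coeff_comp_neg_X, coeff_comp_neg_X, coeff_reverse, hdeg]
  congr 1
  rcases le_or_gt n P.natDegree with hn | hn
  · obtain ⟨k, hk⟩ := heven
    rw [revAt_le hn, neg_one_pow_eq_pow_mod_two, neg_one_pow_eq_pow_mod_two (n := n)]
    congr 1
    omega
  · rw [revAt_eq_self_of_lt hn]

lemma negU_mul (f g : PS) : negU (f * g) = negU f * negU g := map_mul _ _ _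

lemma negU_negU (f : PS) : negU (negU f) = f := by
  rw [negU, negU, rescale_rescale]
  norm_num

lemma constantCoeff_negU (f : PS) : constantCoeff (negU f) = constantCoeff f := by
  rw [← coeff_zero_eq_constantCoeff_apply, ← coeff_zero_eq_constantCoeff_apply, negU,
    coeff_rescale, pow_zero, one_mul]

lemma coeff_odd_eq_zero_of_negU_eq {f : PS} (hf : negU f = f) {n : ℕ} (hn : Odd n) :
    PowerSeries.coeff n f = 0 := by
  have h := congrArg (PowerSeries.coeff n) hf
  rw [negU, coeff_rescale, hn.neg_one_pow, neg_one_mul, neg_eq_iff_add_eq_zero,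
    ← two_mul, mul_eq_zero] at h
  exact h.resolve_left two_ne_zero

lemma negU_mul_negU_self (F : PS) : negU (F * negU F) = F * negU F := by
  rw [negU_mul, negU_negU, mul_comm]

lemma negU_eq_self_of_mul {f g : PS} (hg : g ≠ 0) (hg_fix : negU g = g)
    (hfg : negU (f * g) = f * g) : negU f = f :=
  mul_right_cancel₀ hg <| by rw [← hfg, negU_mul, hg_fix]

lemma negU_coe (Q : ℂ[X]) : negU (Q : PS) = (Q.comp (-Polynomial.X) : PS) := by
  ext n
  rw [negU, coeff_rescale, Polynomial.coeff_coe, Polynomial.coeff_coe, coeff_comp_neg_X]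

lemma constantCoeff_lowerP (P : ℂ[X]) : constantCoeff (lowerP P) = P.leadingCoeff := by
  rw [lowerP, ← coeff_zero_eq_constantCoeff_apply, Polynomial.coeff_coe, coeff_zero_reverse]

lemma negU_lowerP_of_comp_one_sub {P : ℂ[X]} (heven : Even P.natDegree)
    (hsymm : P.comp (1 - Polynomial.X) = P) :
    negU (lowerP P) = lowerP (P.comp (Polynomial.X + 1)) := by
  have hshift : P.comp (Polynomial.X + 1) = P.comp (-Polynomial.X) := by
    conv_lhs => rw [← hsymm, comp_assoc]
    simp [sub_comp]
  rw [lowerP, lowerP, negU_coe, hshift, reverse_comp_neg_X heven]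

lemma constantCoeff_lowerP_of_monic {P : ℂ[X]} (hP : P.Monic) :
    constantCoeff (lowerP P) = 1 := by
  rw [constantCoeff_lowerP, hP.leadingCoeff]

lemma IsPolyPS.one : IsPolyPS 1 := ⟨1, Polynomial.coe_one⟩

lemma IsPolyPS.mul {f g : PS} (hf : IsPolyPS f) (hg : IsPolyPS g) : IsPolyPS (f * g) := by
  obtain ⟨F, rfl⟩ := hf
  obtain ⟨G, rfl⟩ := hg
  exact ⟨F * G, Polynomial.coe_mul F G⟩

lemma IsPolyPS.negU {f : PS} (hf : IsPolyPS f) : IsPolyPS (negU f) := by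
  obtain ⟨F, rfl⟩ := hf
  exact ⟨_, (negU_coe F).symm⟩

lemma isPolyPS_lowerP (P : ℂ[X]) : IsPolyPS (lowerP P) := ⟨P.reverse, rfl⟩

def IsPolyRatio (f g : PS) : Prop :=
  ∃ A B : PS, IsPolyPS A ∧ IsPolyPS B ∧ constantCoeff B = 1 ∧ f * A = g * B

lemma Arrow.isPolyRatio {f g : PS} (h : Arrow f g) : IsPolyRatio f g := by
  obtain ⟨P, hP, hfg⟩ := h
  exact ⟨_, _, isPolyPS_lowerP P, isPolyPS_lowerP _,
    constantCoeff_lowerP_of_monic (by simpa using hP.comp_X_add_C (1 : ℂ)),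
    hfg⟩

lemma exists_common_denom_of_isPolyRatio (μ : ℕ → PS) (k : ℕ)
    (h : ∀ i < k, IsPolyRatio (μ i) (μ (i + 1))) :
    ∃ D, IsPolyPS D ∧ constantCoeff D = 1 ∧ ∀ i ≤ k, ∃ A, IsPolyPS A ∧ μ 0 * A = μ i * D := by
  induction k with
  | zero =>
    refine ⟨1, .one, map_one _, fun i hi => ⟨1, .one, ?_⟩⟩
    rw [Nat.le_zero.mp hi]
  | succ k ih =>
    obtain ⟨D, hD, hD1, hDμ⟩ := ih fun i hi => h i (by omega)
    obtain ⟨A', B, hA', hB, hB1, hAB⟩ := h k (lt_add_one k)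
    refine ⟨D * B, hD.mul hB, by rw [map_mul, hD1, hB1, one_mul], fun i hi => ?_⟩
    rcases Nat.le_succ_iff.mp hi with hi | rfl
    · obtain ⟨A, hA, hAμ⟩ := hDμ i hi
      exact ⟨A * B, hA.mul hB, by linear_combination B * hAμ⟩
    · obtain ⟨A, hA, hAμ⟩ := hDμ k le_rfl
      exact ⟨A * A', hA.mul hA', by linear_combination A' * hAμ + D * hAB⟩

lemma evenOne_lowerP_mul_inv_mul_negU {f D : PS} {P : ℂ[X]} (hf : One1 f) (hP : P.Monic)
    (hPeven : Even P.natDegree) (hPsymm : P.comp (1 - Polynomial.X) = P)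
    (hfP : negU f * lowerP P = f * lowerP (P.comp (Polynomial.X + 1)))
    (hD : constantCoeff D = 1) :
    EvenOne (lowerP P * f⁻¹ * (D * negU D)) := by
  have hf0 : constantCoeff f ≠ 0 := by rw [hf]; exact one_ne_zero
  have hL : negU (lowerP P) = lowerP (P.comp (Polynomial.X + 1)) :=
    negU_lowerP_of_comp_one_sub hPeven hPsymm
  refine ⟨?_, fun n hn => coeff_odd_eq_zero_of_negU_eq ?_ hn⟩
  · rw [One1, map_mul, map_mul, map_mul, constantCoeff_lowerP_of_monic hP, constantCoeff_inv,
      hf, constantCoeff_negU, hD]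
    norm_num
  have hg0 : f * negU (lowerP P) ≠ 0 := fun h => hf0 <| by
    simpa [constantCoeff_negU, constantCoeff_lowerP_of_monic hP]
      using congrArg PowerSeries.constantCoeff h
  refine negU_eq_self_of_mul hg0 (by rw [negU_mul, negU_negU, hfP, hL]) ?_
  have hff : f⁻¹ * f = 1 := PowerSeries.inv_mul_cancel f hf0
  have hprod : lowerP P * f⁻¹ * (D * negU D) * (f * negU (lowerP P)) =
      lowerP P * D * negU (lowerP P * D) := by
    rw [negU_mul]
    linear_combination lowerP P * D * negU D * negU (lowerP P) * hff
  rw [hprod, negU_mul_negU_self]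

/-- If μ₁(−u) ⇒ μ₁(u) → μ₂(u) → ⋯ → μ_m(u) then there is a common even γ with all
γ·μ_i polynomials in u⁻¹. -/
theorem chain_common_even_gamma (m : ℕ) (μ : ℕ → PS) (hm : 0 < m)
    (hone : ∀ i < m, One1 (μ i))
    (h0 : DArrow (negU (μ 0)) (μ 0))
    (hchain : ∀ i, i + 1 < m → Arrow (μ i) (μ (i + 1))) :
    ∃ γ : PS, EvenOne γ ∧ ∀ i < m, IsPolyPS (γ * μ i) := by
  obtain ⟨P, hP, hPeven, hPsymm, hPμ⟩ := h0
  obtain ⟨D, hD, hD1, hDμ⟩ := exists_common_denom_of_isPolyRatio μ (m - 1)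
    fun i hi => (hchain i (by omega)).isPolyRatio
  refine ⟨lowerP P * (μ 0)⁻¹ * (D * negU D),
    evenOne_lowerP_mul_inv_mul_negU (hone 0 hm) hP hPeven hPsymm hPμ hD1, fun i hi => ?_⟩
  obtain ⟨A, hA, hAμ⟩ := hDμ i (by omega)
  have hμ0 : (μ 0)⁻¹ * μ 0 = 1 :=
    PowerSeries.inv_mul_cancel _ (by rw [hone 0 hm]; exact one_ne_zero)
  have hγμ : lowerP P * (μ 0)⁻¹ * (D * negU D) * μ i = lowerP P * negU D * A := by
    linear_combination lowerP P * negU D * A * hμ0 - lowerP P * negU D * (μ 0)⁻¹ * hAμ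
  rw [hγμ]
  exact ((isPolyPS_lowerP P).mul hD.negU).mul hA
end
end

section
/- Let γ(u) ∈ 1 + u⁻²ℂ[[u⁻²]], and let μ(u) = γ(u)⁻¹(1+½u⁻¹)⁻¹(1−a₁u⁻¹)⋯(1−a_{2k+1}u⁻¹), where a_{2k+1} is the ♯′-special element of (a₁,…,a_{2k+1}) and a_{2i−1}+a_{2i} ∈ ℤ_{≥0} for i = 1,…,k. Then ((2u−1)/(2u+1))·μ(−u) ⇒ μ(u) if and only if a_{2k+1} ∈ ℤ_{≥0}. -/
open PowerSeries Polynomial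

noncomputable section

/-- The ♯′-condition on the list `a 0, …, a (2k)` (0-indexed): for each `i < k`,
whenever `{a p + a q : 2i ≤ p < q ≤ 2k} ∩ ℤ_{≥0}` is non-empty, `a (2i) + a (2i+1)`
is its minimal element for the order `x ≥ y ↔ x - y ∈ ℤ_{≥0}`. -/
def SharpCond (k : ℕ) (a : ℕ → ℂ) : Prop :=
  ∀ i < k,
    (∃ p q, 2*i ≤ p ∧ p < q ∧ q ≤ 2*k ∧ IsNonnegInt (a p + a q)) →
      IsNonnegInt (a (2*i) + a (2*i+1)) ∧
      ∀ p q, 2*i ≤ p → p < q → q ≤ 2*k → IsNonnegInt (a p + a q) →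
        IsNonnegInt (a p + a q - (a (2*i) + a (2*i+1)))

/-- `b` is a re-indexing (permutation) of the first `m` entries of `a`. -/
def PermOf (m : ℕ) (b a : ℕ → ℂ) : Prop :=
  ∃ σ : Equiv.Perm (Fin m), ∀ i : Fin m, b i = a (σ i)

/-- `x` is a ♯′-special element of the list `a 0, …, a (2k)`. -/
def IsSharpSpecial' (k : ℕ) (a : ℕ → ℂ) (x : ℂ) : Prop :=
  ∃ b : ℕ → ℂ, PermOf (2*k+1) b a ∧ SharpCond k b ∧ b (2*k) = x

/-!
After cancelling the even series `γ` and the unit `γ(u)(1 + ½u⁻¹)`, the relation `⇒` asks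
for a monic `P` of even degree with `P(1 - u) = P(u)` and
`∏ᵢ (u + aᵢ) · P(u) = ∏ᵢ (u - aᵢ) · P(u + 1)`. Such solutions multiply. When `a (2k) = n ∈ ℕ`,
one can take a product of root strings: for each pair `a + b = m`, the roots
`a, a - 1, …, a - m + 1` and `b, …, b - m + 1`, and for `n`, the `2n` roots `n, …, 1 - n`.

Conversely, comparing roots gives `-A + roots P = A + (roots P - 1)` for the multiset `A` of
the `aᵢ`. Taking sums gives `deg P = 2 ∑ aᵢ`, so `a (2k)` is an integer. Suppose it were
`-n < 0`. Counting the elements of both sides that are integers `≥ n` shows that at most as many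
`aᵢ` are integers `≤ -n` as are integers `≥ n`. But by ♯′-minimality, each `a_p ≥ n` has a pair
partner `a_q ≤ -n`, because `a_p + a_q ≤ a_p + a (2k)`. This injects the former entries into the
latter, and it misses `a (2k) = -n`, which is a contradiction.
-/

lemma Finset.sum_range_eq_sum_pairs {M : Type*} [AddCommMonoid M] (f : ℕ → M) (k : ℕ) :
    ∑ i ∈ Finset.range (2 * k + 1), f i =
      ∑ i ∈ Finset.range k, (f (2 * i) + f (2 * i + 1)) + f (2 * k) := by
  induction k with
  | zero => simp
  | succ k ih =>
    rw [Finset.sum_range_succ, show 2 * (k + 1) = 2 * k + 1 + 1 by ring, Finset.sum_range_succ,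
      ih, Finset.sum_range_succ, add_assoc _ (f (2 * k))]

lemma countP_map_neg_le_of_add_eq {G : Type*} [AddGroupWithOne G] {A R : Multiset G}
    (h : A.map Neg.neg + R = A + R.map (· - 1)) (p : G → Prop) [DecidablePred p]
    (hp : ∀ x, p (x - 1) → p x) : (A.map Neg.neg).countP p ≤ A.countP p := by
  have hcount := congrArg (Multiset.countP p) h
  have hR : (R.map (· - 1)).countP p ≤ R.countP p := by
    rw [Multiset.countP_map, Multiset.countP_eq_card_filter]
    exact Multiset.card_le_card (Multiset.monotone_filter_right R hp)
  rw [Multiset.countP_add, Multiset.countP_add] at hcount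
  omega

lemma Polynomial.reverse_one {R : Type*} [Semiring R] : (1 : R[X]).reverse = 1 := by
  simpa using reverse_C (1 : R)

lemma Polynomial.reverse_X {R : Type*} [Semiring R] : (X : R[X]).reverse = 1 := by
  simpa [reverse_one] using reverse_X_mul (1 : R[X])

section ShiftEquation

variable {K : Type*} [CommRing K]

def IsShiftSolution (A : Multiset K) (P : K[X]) : Prop :=
  (A.map fun a => Polynomial.X + Polynomial.C a).prod * P =
    (A.map fun a => Polynomial.X - Polynomial.C a).prod * P.comp (Polynomial.X + 1)

lemma prod_X_add_C_eq (A : Multiset K) :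
    (A.map fun a => Polynomial.X + Polynomial.C a).prod =
      ((A.map Neg.neg).map fun a => Polynomial.X - Polynomial.C a).prod := by
  simp [Multiset.map_map]

lemma natDegree_shift_sides_eq [IsDomain K] (A : Multiset K) (P : K[X]) :
    ((A.map fun a => (Polynomial.X + Polynomial.C a)).prod * P).natDegree =
      ((A.map fun a => Polynomial.X - Polynomial.C a).prod *
        P.comp (Polynomial.X + 1)).natDegree := by
  rcases eq_or_ne P 0 with rfl | hP
  · simp
  have hcomp : P.comp (Polynomial.X + 1) ≠ 0 := by
    simpa using (comp_X_add_C_ne_zero_iff (t := (1 : K))).mpr hP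
  have hmonic (B : Multiset K) : (B.map fun a => Polynomial.X - Polynomial.C a).prod.Monic :=
    monic_multiset_prod_of_monic _ _ fun a _ => monic_X_sub_C a
  rw [prod_X_add_C_eq, (hmonic _).natDegree_mul' hP, (hmonic A).natDegree_mul' hcomp,
    natDegree_multiset_prod_X_sub_C_eq_card, natDegree_multiset_prod_X_sub_C_eq_card,
    natDegree_comp, show (Polynomial.X + 1 : K[X]) = Polynomial.X + Polynomial.C 1 by simp,
    natDegree_X_add_C, mul_one, Multiset.card_map]

lemma IsShiftSolution.mul {A B : Multiset K} {P Q : K[X]} (hP : IsShiftSolution A P)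
    (hQ : IsShiftSolution B Q) : IsShiftSolution (A + B) (P * Q) := by
  unfold IsShiftSolution at *
  simp only [Multiset.map_add, Multiset.prod_add, mul_comp]
  linear_combination (A.map fun a => (Polynomial.X + Polynomial.C a)).prod * P * hQ
    + (B.map fun a => (Polynomial.X - Polynomial.C a)).prod * Q.comp (Polynomial.X + 1) * hP

lemma IsShiftSolution.roots_eq [IsDomain K] {A : Multiset K} {P : K[X]} (hP : P ≠ 0)
    (h : IsShiftSolution A P) : A.map Neg.neg + P.roots = A + P.roots.map (· - 1) := by
  have hL : (A.map fun a => (Polynomial.X + Polynomial.C a)).prod * P ≠ 0 := by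
    rw [prod_X_add_C_eq]
    exact mul_ne_zero (monic_multiset_prod_of_monic _ _ fun a _ => monic_X_sub_C a).ne_zero hP
  have hR : (A.map fun a => Polynomial.X - Polynomial.C a).prod * P.comp (Polynomial.X + 1) ≠ 0 :=
    h ▸ hL
  have hroots := congrArg roots h
  rw [roots_mul hL, roots_mul hR, prod_X_add_C_eq, roots_multiset_prod_X_sub_C,
    roots_multiset_prod_X_sub_C,
    show (Polynomial.X + 1 : K[X]) = Polynomial.C 1 * Polynomial.X + Polynomial.C 1 by simp,
    roots_comp_C_mul_X_add_C P 1 1 isUnit_one] at hroots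
  simpa using hroots

lemma IsShiftSolution.natDegree_eq {F : Type*} [Field F] [IsAlgClosed F] {A : Multiset F}
    {P : F[X]} (hP : P ≠ 0) (h : IsShiftSolution A P) : (P.natDegree : F) = 2 * A.sum := by
  have hsum := congrArg Multiset.sum (h.roots_eq hP)
  simp only [Multiset.sum_add, Multiset.sum_map_neg', Multiset.sum_map_sub, Multiset.map_id',
    Multiset.map_const', Multiset.sum_replicate, IsAlgClosed.card_roots_eq_natDegree,
    nsmul_one] at hsum
  linear_combination hsum

end ShiftEquation

section ChainPoly

variable {K : Type*} [CommRing K]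

def chainPoly (c : K) (m : ℕ) : K[X] :=
  ∏ j ∈ Finset.range m, (Polynomial.X - Polynomial.C (c - j))

lemma chainPoly_monic (c : K) (m : ℕ) : (chainPoly c m).Monic :=
  monic_prod_of_monic _ _ fun _ _ => monic_X_sub_C _

lemma chainPoly_natDegree [Nontrivial K] (c : K) (m : ℕ) : (chainPoly c m).natDegree = m := by
  rw [chainPoly, natDegree_prod_of_monic _ _ fun _ _ => monic_X_sub_C _]
  simp only [natDegree_X_sub_C, Finset.sum_const, Finset.card_range, smul_eq_mul, mul_one]

lemma chainPoly_comp_X_add_one (c : K) (m : ℕ) :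
    (chainPoly c m).comp (Polynomial.X + 1) = chainPoly (c - 1) m := by
  simp only [chainPoly, prod_comp, sub_comp, X_comp, C_comp]
  refine Finset.prod_congr rfl fun j _ => ?_
  simp only [map_sub, map_one]
  ring

lemma X_sub_C_mul_chainPoly_comp (c : K) (m : ℕ) :
    (Polynomial.X - Polynomial.C c) * (chainPoly c m).comp (Polynomial.X + 1) =
      (Polynomial.X - Polynomial.C (c - m)) * chainPoly c m := by
  have hsucc : chainPoly c (m + 1) = (Polynomial.X - Polynomial.C c) * chainPoly (c - 1) m := by
    rw [chainPoly, Finset.prod_range_succ', mul_comm, chainPoly]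
    congr 1
    · simp
    · refine Finset.prod_congr rfl fun j _ => ?_
      push_cast
      ring_nf
  rw [chainPoly_comp_X_add_one, ← hsucc, chainPoly, Finset.prod_range_succ, mul_comm]
  rfl

lemma chainPoly_comp_one_sub (c : K) (m : ℕ) :
    (chainPoly c m).comp (1 - Polynomial.X) = (-1) ^ m * chainPoly (m - c) m := by
  have hfactor : ∀ j ∈ Finset.range m,
      (Polynomial.X - Polynomial.C (c - j)).comp (1 - Polynomial.X) =
        -(Polynomial.X - Polynomial.C ((m - c) - (m - 1 - j : ℕ))) := by
    intro j hj
    have hjm := Finset.mem_range.mp hj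
    rw [Nat.sub_sub, Nat.cast_sub (by omega)]
    simp only [sub_comp, X_comp, C_comp]
    push_cast
    simp only [map_sub, map_add, map_one, map_natCast]
    ring
  rw [chainPoly, prod_comp, Finset.prod_congr rfl hfactor, Finset.prod_neg, Finset.card_range]
  exact congrArg _
    (Finset.prod_range_reflect (fun j : ℕ => Polynomial.X - Polynomial.C ((m : K) - c - j)) m)

lemma isShiftSolution_chainPoly_pair {a b : K} {m : ℕ} (hab : a + b = m) :
    IsShiftSolution {a, b} (chainPoly a m * chainPoly b m) := by
  have ha := X_sub_C_mul_chainPoly_comp a m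
  have hb := X_sub_C_mul_chainPoly_comp b m
  rw [show a - m = -b by linear_combination hab, map_neg, sub_neg_eq_add] at ha
  rw [show b - m = -a by linear_combination hab, map_neg, sub_neg_eq_add] at hb
  simp only [IsShiftSolution, Multiset.insert_eq_cons, Multiset.map_cons, Multiset.map_singleton,
    Multiset.prod_cons, Multiset.prod_singleton, mul_comp]
  linear_combination
    (-(Polynomial.X - Polynomial.C b) * (chainPoly b m).comp (Polynomial.X + 1)) * ha
      - (Polynomial.X + Polynomial.C b) * chainPoly a m * hb

lemma chainPoly_pair_comp_one_sub {a b : K} {m : ℕ} (hab : a + b = m) :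
    (chainPoly a m * chainPoly b m).comp (1 - Polynomial.X) = chainPoly a m * chainPoly b m := by
  rw [mul_comp, chainPoly_comp_one_sub, chainPoly_comp_one_sub,
    show (m : K) - a = b by linear_combination -hab,
    show (m : K) - b = a by linear_combination -hab]
  have hsq : ((-1 : K[X]) ^ m) * (-1) ^ m = 1 := by rw [← mul_pow]; simp
  linear_combination (chainPoly b m * chainPoly a m) * hsq

lemma isShiftSolution_chainPoly_self (n : ℕ) :
    IsShiftSolution {(n : K)} (chainPoly (n : K) (2 * n)) := by
  have h := X_sub_C_mul_chainPoly_comp (n : K) (2 * n)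
  rw [show (n : K) - (2 * n : ℕ) = -n by push_cast; ring, map_neg, sub_neg_eq_add] at h
  simp only [IsShiftSolution, Multiset.map_singleton, Multiset.prod_singleton]
  exact h.symm

lemma chainPoly_self_comp_one_sub (n : ℕ) :
    (chainPoly (n : K) (2 * n)).comp (1 - Polynomial.X) = chainPoly (n : K) (2 * n) := by
  rw [chainPoly_comp_one_sub, show ((2 * n : ℕ) : K) - n = n by push_cast; ring, pow_mul]
  simp

end ChainPoly

section ShiftSolvable

variable (K : Type*) [CommRing K]

def shiftSolvable : AddSubmonoid (Multiset K) where
  carrier := {A | ∃ P : K[X], P.Monic ∧ Even P.natDegree ∧ P.comp (1 - Polynomial.X) = P ∧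
    IsShiftSolution A P}
  zero_mem' := ⟨1, monic_one, by simp, by simp, by simp [IsShiftSolution]⟩
  add_mem' := by
    rintro A B ⟨P, hPm, hPd, hPs, hP⟩ ⟨Q, hQm, hQd, hQs, hQ⟩
    refine ⟨P * Q, hPm.mul hQm, ?_, by rw [mul_comp, hPs, hQs], hP.mul hQ⟩
    rw [hPm.natDegree_mul hQm]
    exact hPd.add hQd

variable {K}

lemma pair_mem_shiftSolvable [Nontrivial K] {a b : K} {m : ℕ} (hab : a + b = m) :
    {a, b} ∈ shiftSolvable K := by
  refine ⟨_, (chainPoly_monic a m).mul (chainPoly_monic b m), ⟨m, ?_⟩,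
    chainPoly_pair_comp_one_sub hab, isShiftSolution_chainPoly_pair hab⟩
  rw [(chainPoly_monic a m).natDegree_mul (chainPoly_monic b m), chainPoly_natDegree,
    chainPoly_natDegree]

lemma natCast_mem_shiftSolvable [Nontrivial K] (n : ℕ) : {(n : K)} ∈ shiftSolvable K := by
  refine ⟨_, chainPoly_monic _ _, ⟨n, ?_⟩, chainPoly_self_comp_one_sub n,
    isShiftSolution_chainPoly_self n⟩
  rw [chainPoly_natDegree, two_mul]

end ShiftSolvable

lemma IsNonnegInt.add {z w : ℂ} (hz : IsNonnegInt z) (hw : IsNonnegInt w) :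
    IsNonnegInt (z + w) := by
  obtain ⟨m, rfl⟩ := hz
  obtain ⟨n, rfl⟩ := hw
  exact ⟨m + n, by push_cast; ring⟩

section SharpCond

variable {k : ℕ} {a : ℕ → ℂ}

/-- `4 * (p / 2) + 1 - p` is the partner of `p` in its pair `{2i, 2i+1}`. -/
lemma SharpCond.isNonnegInt_last_sub_partner (hcond : SharpCond k a) {p : ℕ} (hp : p < 2 * k)
    (h : IsNonnegInt (a p + a (2 * k))) : IsNonnegInt (a (2 * k) - a (4 * (p / 2) + 1 - p)) := by
  obtain ⟨i, hi⟩ : ∃ i, i = p / 2 := ⟨_, rfl⟩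
  rw [← hi]
  have hpair : a p + a (4 * i + 1 - p) = a (2 * i) + a (2 * i + 1) := by
    obtain rfl | rfl : p = 2 * i ∨ p = 2 * i + 1 := by omega
    · rw [show 4 * i + 1 - 2 * i = 2 * i + 1 by omega]
    · rw [show 4 * i + 1 - (2 * i + 1) = 2 * i by omega, add_comm]
  have hmin := (hcond i (by omega) ⟨p, 2 * k, by omega, hp, le_rfl, h⟩).2 p (2 * k)
    (by omega) hp le_rfl h
  rwa [← hpair, add_sub_add_left_eq_sub] at hmin

open Classical in
lemma SharpCond.card_filter_lt (hcond : SharpCond k a) {n : ℕ} (hn : n ≠ 0)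
    (han : a (2 * k) = -n) :
    ((Finset.range (2 * k + 1)).filter fun p => IsNonnegInt (a p - n)).card <
      ((Finset.range (2 * k + 1)).filter fun p => IsNonnegInt (-a p - n)).card := by
  have hlast : 2 * k ∈ (Finset.range (2 * k + 1)).filter fun p => IsNonnegInt (-a p - n) := by
    simp only [Finset.mem_filter, Finset.mem_range, han, neg_neg, sub_self]
    exact ⟨by omega, 0, by simp⟩
  refine lt_of_le_of_lt (Finset.card_le_card_of_injOn (fun p => 4 * (p / 2) + 1 - p) ?_ ?_)
    (Finset.card_erase_lt_of_mem hlast)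
  · intro p hp
    simp only [Finset.coe_filter, Finset.mem_range, Set.mem_ofPred_eq] at hp
    obtain ⟨hp, hpn⟩ := hp
    have hpk : p ≠ 2 * k := by
      rintro rfl
      obtain ⟨m, hm⟩ := hpn
      rw [han] at hm
      have : ((m + 2 * n : ℕ) : ℂ) = 0 := by push_cast; linear_combination -hm
      rw [Nat.cast_eq_zero] at this
      omega
    have hpartner := hcond.isNonnegInt_last_sub_partner (p := p) (by omega)
      (by rwa [han, ← sub_eq_add_neg])
    simp only [Finset.coe_erase, Finset.coe_filter, Finset.mem_range, Set.mem_sdiff,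
      Set.mem_ofPred_eq, Set.mem_singleton_iff]
    refine ⟨⟨by omega, ?_⟩, by omega⟩
    rwa [han, neg_sub_comm] at hpartner
  · intro p _ q _ h
    simp only at h
    omega

end SharpCond

lemma isNonnegInt_of_mem_shiftSolvable {k : ℕ} {a : ℕ → ℂ} (hcond : SharpCond k a)
    (hpa : ∀ i < k, IsNonnegInt (a (2 * i) + a (2 * i + 1)))
    (h : (Finset.range (2 * k + 1)).val.map a ∈ shiftSolvable ℂ) : IsNonnegInt (a (2 * k)) := by
  classical
  obtain ⟨P, hmon, ⟨d, hd⟩, -, hP⟩ := h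
  obtain ⟨z, hz⟩ : ∃ z : ℤ, a (2 * k) = z := by
    obtain ⟨M, hM⟩ : IsNonnegInt (∑ i ∈ Finset.range k, (a (2 * i) + a (2 * i + 1))) :=
      Finset.sum_induction _ _ (fun _ _ => IsNonnegInt.add) ⟨0, by simp⟩
        fun i hi => hpa i (Finset.mem_range.mp hi)
    have hdeg := hP.natDegree_eq hmon.ne_zero
    rw [Finset.sum_map_val, Finset.sum_range_eq_sum_pairs, hM, hd] at hdeg
    exact ⟨d - M, by push_cast at hdeg ⊢; linear_combination -hdeg / 2⟩
  obtain ⟨n, rfl | rfl⟩ := Int.eq_nat_or_neg z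
  · exact ⟨n, by simpa using hz⟩
  rcases eq_or_ne n 0 with rfl | hn
  · exact ⟨0, by simpa using hz⟩
  have hle := countP_map_neg_le_of_add_eq (hP.roots_eq hmon.ne_zero)
    (fun x => IsNonnegInt (x - n))
    fun x ⟨m, hm⟩ => ⟨m + 1, by push_cast; linear_combination hm⟩
  rw [Multiset.map_map, Multiset.countP_map, Multiset.countP_map, ← Finset.filter_val,
    ← Finset.filter_val] at hle
  have hlt := hcond.card_filter_lt hn (by simpa using hz)
  simp only [Function.comp_apply, Finset.card_val] at hle
  omega

lemma map_range_mem_shiftSolvable {k : ℕ} {a : ℕ → ℂ}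
    (hpa : ∀ i < k, IsNonnegInt (a (2 * i) + a (2 * i + 1))) (hlast : IsNonnegInt (a (2 * k))) :
    (Finset.range (2 * k + 1)).val.map a ∈ shiftSolvable ℂ := by
  have hpairs : (Finset.range (2 * k + 1)).val.map a =
      ∑ i ∈ Finset.range k, ({a (2 * i), a (2 * i + 1)} : Multiset ℂ) + {a (2 * k)} := by
    rw [← Multiset.sum_map_singleton ((Finset.range _).val.map a), Multiset.map_map,
      Finset.sum_map_val, Finset.sum_range_eq_sum_pairs]
    rfl
  obtain ⟨n, hn⟩ := hlast
  rw [hpairs, hn]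
  refine add_mem (sum_mem fun i hi => ?_) (natCast_mem_shiftSolvable n)
  obtain ⟨m, hm⟩ := hpa i (Finset.mem_range.mp hi)
  exact pair_mem_shiftSolvable hm

lemma lowerP_X_add_C (c : ℂ) : lowerP (Polynomial.X + Polynomial.C c) = linF c := by
  simp [lowerP, linF, reverse_add_C, reverse_X]

lemma lowerP_X_sub_C (c : ℂ) : lowerP (Polynomial.X - Polynomial.C c) = linF (-c) := by
  rw [sub_eq_add_neg, ← map_neg, lowerP_X_add_C]

def lowerPHom : ℂ[X] →* PS where
  toFun := lowerP
  map_one' := by simp [lowerP, reverse_one]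
  map_mul' p q := by simp [lowerP, reverse_mul_of_domain]

lemma lowerP_multiset_prod_mul (A : Multiset ℂ) (f : ℂ → ℂ[X]) (Q : ℂ[X]) :
    lowerP ((A.map f).prod * Q) = (A.map fun a => lowerP (f a)).prod * lowerP Q := by
  change lowerPHom _ = _
  rw [map_mul, map_multiset_prod, Multiset.map_map]
  rfl

lemma lowerP_injective_of_natDegree_eq {p q : ℂ[X]} (hd : p.natDegree = q.natDegree)
    (h : lowerP p = lowerP q) : p = q :=
  calc p = p.reverse.reflect p.natDegree := reflect_reflect.symm
    _ = q.reverse.reflect q.natDegree := by rw [Polynomial.coe_injective ℂ h, hd]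
    _ = q := reflect_reflect

lemma isShiftSolution_iff_lowerP (A : Multiset ℂ) (P : ℂ[X]) :
    (A.map linF).prod * lowerP P =
        (A.map fun a => linF (-a)).prod * lowerP (P.comp (Polynomial.X + 1)) ↔
      IsShiftSolution A P := by
  have hL : (A.map linF).prod * lowerP P =
      lowerP ((A.map fun a => Polynomial.X + Polynomial.C a).prod * P) := by
    simp only [lowerP_multiset_prod_mul, lowerP_X_add_C]
  have hR : (A.map fun a => linF (-a)).prod * lowerP (P.comp (Polynomial.X + 1)) =
      lowerP ((A.map fun a => Polynomial.X - Polynomial.C a).prod * P.comp (Polynomial.X + 1)) := by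
    simp only [lowerP_multiset_prod_mul, lowerP_X_sub_C]
  rw [hL, hR]
  exact ⟨lowerP_injective_of_natDegree_eq (natDegree_shift_sides_eq A P),
    congrArg lowerP⟩

lemma negU_linF (c : ℂ) : negU (linF c) = linF (-c) := by
  have hC : PowerSeries.rescale (-1) (PowerSeries.C c) = PowerSeries.C c := by
    ext n
    rcases eq_or_ne n 0 with rfl | hn <;> simp [PowerSeries.coeff_C, *]
  simp [negU, linF, PowerSeries.rescale_X, hC]

lemma negU_of_evenOne {γ : PS} (hγ : EvenOne γ) : negU γ = γ := by
  ext n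
  rw [negU, PowerSeries.coeff_rescale]
  rcases Nat.even_or_odd n with he | ho
  · rw [he.neg_one_pow, one_mul]
  · rw [hγ.2 n ho, mul_zero]

lemma twist_mul {γ : PS} (hγ : EvenOne γ) (μ : PS) :
    linF (-(1 / 2)) * (linF (1 / 2))⁻¹ * negU μ * (γ * linF (1 / 2)) =
      negU (γ * linF (1 / 2) * μ) := by
  have hinv : (linF (1 / 2))⁻¹ * linF (1 / 2) = 1 :=
    PowerSeries.inv_mul_cancel _ (by simp [linF])
  rw [negU_mul, negU_mul, negU_of_evenOne hγ, negU_linF]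
  linear_combination (γ * linF (-(1 / 2)) * negU μ) * hinv

lemma darrow_twist_iff_mem_shiftSolvable {γ μ : PS} (hγ : EvenOne γ) {A : Multiset ℂ}
    (hdef : γ * linF (1 / 2) * μ = (A.map fun a => linF (-a)).prod) :
    DArrow (linF (-(1 / 2)) * (linF (1 / 2))⁻¹ * negU μ) μ ↔ A ∈ shiftSolvable ℂ := by
  have hU : γ * linF (1 / 2) ≠ 0 := fun h => by
    have h1 : PowerSeries.constantCoeff γ = 1 := hγ.1
    simpa [linF, h1] using congrArg PowerSeries.constantCoeff h
  have hneg : negU (A.map fun a => linF (-a)).prod = (A.map linF).prod := by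
    rw [negU, map_multiset_prod, Multiset.map_map]
    refine congrArg _ (Multiset.map_congr rfl fun a _ => ?_)
    exact (negU_linF (-a)).trans (by rw [neg_neg])
  have hcancel : ∀ F G : PS, linF (-(1 / 2)) * (linF (1 / 2))⁻¹ * negU μ * F = μ * G ↔
      (A.map linF).prod * F = (A.map fun a => linF (-a)).prod * G := by
    intro F G
    rw [← hneg, ← hdef, ← twist_mul hγ μ, ← mul_left_inj' hU]
    constructor <;> intro h <;> linear_combination h
  exact exists_congr fun P => by rw [hcancel, isShiftSolution_iff_lowerP]

theorem darrow_twist_iff_special_nonneg_general (k : ℕ) (a : ℕ → ℂ) (γ μ : PS)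
    (hγ : EvenOne γ)
    (hcond : SharpCond k a)
    (hpa : ∀ i < k, IsNonnegInt (a (2*i) + a (2*i+1)))
    (hdef : γ * linF (1/2) * μ = ∏ i ∈ Finset.range (2*k+1), linF (-(a i))) :
    DArrow (linF (-(1/2)) * (linF (1/2))⁻¹ * negU μ) μ ↔
      IsNonnegInt (a (2*k)) := by
  rw [darrow_twist_iff_mem_shiftSolvable hγ (A := (Finset.range (2 * k + 1)).val.map a)
    (by rw [hdef, Multiset.map_map, Finset.prod_map_val]; rfl)]
  exact ⟨isNonnegInt_of_mem_shiftSolvable hcond hpa, map_range_mem_shiftSolvable hpa⟩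

/-- With μ as in the setup: ((2u−1)/(2u+1))·μ(−u) ⇒ μ(u) iff a_{2k+1} ≥ 0. -/
theorem darrow_twist_iff_special_nonneg (k : ℕ) (a : ℕ → ℂ) (γ μ : PS)
    (hγ : EvenOne γ) (hμ : One1 μ)
    (hcond : SharpCond k a)
    (hpa : ∀ i < k, IsNonnegInt (a (2*i) + a (2*i+1)))
    (hdef : γ * linF (1/2) * μ = ∏ i ∈ Finset.range (2*k+1), linF (-(a i))) :
    DArrow (linF (-(1/2)) * (linF (1/2))⁻¹ * negU μ) μ ↔
      IsNonnegInt (a (2*k)) :=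
  darrow_twist_iff_special_nonneg_general k a γ μ hγ hcond hpa hdef
end
end

section
/- Let (a₁,…,a_{2k+1}) be a list of complex numbers with a_{2i−1}+a_{2i} ∈ ℤ_{≥0} for i = 1,…,k and with the ♯′-condition holding, and let (b₁,…,b_{2k+2}) be a re-indexing of the list (a₁,…,a_{2k+1}, ½) such that b_{2i−1} + b_{2i} ∈ ℤ_{≥0} for i = 1,…,k+1. Then a_{2k+1} + ½ ∈ ℤ_{≥0}. -/
open PowerSeries Polynomial

noncomputable section

/-!
Peel the pairs `(a₁, a₂), (a₃, a₄), …` off the list one at a time, keeping a pairing of the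
remaining entries with sums in `ℤ_{≥0}`. If the current pairing matches `a_{2i-1}` with `x` and
`a_{2i}` with `y`, re-pair these four entries as `{a_{2i-1}, a_{2i}}` and `{x, y}`: one of `x, y`,
say `x`, is not the extra entry `½`, and the minimality of `a_{2i-1} + a_{2i}` in the ♯′-condition
gives `x ≥ a_{2i}`, hence `x + y ≥ a_{2i} + y ≥ 0`. In the end only `{a_{2k+1}, ½}` is left.
-/

open Finset

lemma IsNonnegInt.add_s14 {x y : ℂ} (hx : IsNonnegInt x) (hy : IsNonnegInt y) :
    IsNonnegInt (x + y) := by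
  obtain ⟨m, rfl⟩ := hx
  obtain ⟨n, rfl⟩ := hy
  exact ⟨m + n, by push_cast; rfl⟩

def SumIsNonnegInt (c : ℕ → ℂ) (p q : ℕ) : Prop := IsNonnegInt (c p + c q)

instance (c : ℕ → ℂ) : Std.Symm (SumIsNonnegInt c) :=
  ⟨fun _ _ h ↦ by rwa [SumIsNonnegInt, add_comm]⟩

inductive Pairable {ι : Type*} [DecidableEq ι] (r : ι → ι → Prop) : Finset ι → Prop
  | empty : Pairable r ∅
  | insert_pair {s : Finset ι} {p q : ι} :
      Pairable r s → p ∉ s → q ∉ s → p ≠ q → r p q → Pairable r (insert p (insert q s))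

section Pairable

variable {ι : Type*} [DecidableEq ι] {r : ι → ι → Prop}

theorem Pairable.exists_partner [Std.Symm r] {s : Finset ι} (h : Pairable r s) {p : ι}
    (hp : p ∈ s) : ∃ q ∈ s, q ≠ p ∧ r p q ∧ Pairable r ((s.erase p).erase q) := by
  induction h with
  | empty => simp at hp
  | @insert_pair s p' q' hs hp' hq' hpq hrpq ih =>
    rcases mem_insert.1 hp with rfl | hp
    · refine ⟨q', by simp, hpq.symm, hrpq, ?_⟩
      rwa [erase_insert (by simp [hpq, hp']), erase_insert hq']
    rcases mem_insert.1 hp with rfl | hp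
    · refine ⟨p', by simp, hpq, Std.Symm.symm _ _ hrpq, ?_⟩
      rwa [Finset.insert_comm, erase_insert (by simp [hpq.symm, hq']), erase_insert hp']
    obtain ⟨q, hq, hqp, hrpq', hrest⟩ := ih hp
    refine ⟨q, by simp [hq], hqp, hrpq', ?_⟩
    convert hrest.insert_pair (p := p') (q := q') (by simp [hp']) (by simp [hq']) hpq hrpq
      using 1
    ext x
    simp only [mem_erase, mem_insert]
    grind

theorem pairable_image_range {f : ℕ → ι} {n : ℕ} (hf : Set.InjOn f (range (2 * n)))
    (hr : ∀ i < n, r (f (2 * i)) (f (2 * i + 1))) : Pairable r ((range (2 * n)).image f) := by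
  induction n with
  | zero => simpa using Pairable.empty
  | succ n ih =>
    have hdom (j : ℕ) (hj : j < 2 * n + 2) : j ∈ (range (2 * (n + 1)) : Set ℕ) := by
      rw [coe_range, Set.mem_Iio]
      omega
    have hnew (j : ℕ) (hj : 2 * n ≤ j) (hj' : j < 2 * n + 2) : f j ∉ (range (2 * n)).image f := by
      intro hmem
      obtain ⟨l, hl, hlj⟩ := mem_image.1 hmem
      rw [mem_range] at hl
      have := hf (hdom l (by omega)) (hdom j hj') hlj
      omega
    have hpair := (ih (hf.mono (coe_subset.2 (range_mono (by omega)))) fun i hi ↦ hr i (by omega))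
      |>.insert_pair (hnew (2 * n) le_rfl (by omega)) (hnew (2 * n + 1) (by omega) (by omega))
        (fun h ↦ absurd (hf (hdom _ (by omega)) (hdom _ (by omega)) h) (by omega))
        (hr n (by omega))
    convert hpair using 1
    rw [show 2 * (n + 1) = 2 * n + 1 + 1 by ring, range_add_one, range_add_one, image_insert,
      image_insert, Finset.insert_comm]

end Pairable

theorem PermOf.pairable_range {n : ℕ} {b c : ℕ → ℂ} {r : ℂ → ℂ → Prop}
    (hperm : PermOf (2 * n) b c) (hb : ∀ i < n, r (b (2 * i)) (b (2 * i + 1))) :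
    Pairable (fun p q ↦ r (c p) (c q)) (range (2 * n)) := by
  obtain ⟨σ, hσ⟩ := hperm
  let f : ℕ → ℕ := fun j ↦ if h : j < 2 * n then σ ⟨j, h⟩ else j
  have hf (j : ℕ) (h : j < 2 * n) : f j = σ ⟨j, h⟩ := dif_pos h
  have himage : (range (2 * n)).image f = range (2 * n) := by
    ext x
    simp only [mem_image, mem_range]
    constructor
    · rintro ⟨j, hj, rfl⟩
      simp [hf j hj]
    · intro hx
      exact ⟨σ.symm ⟨x, hx⟩, (σ.symm _).isLt, by simp [hf _ (σ.symm _).isLt]⟩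
  rw [← himage]
  refine pairable_image_range (fun j hj l hl hjl ↦ ?_) fun i hi ↦ ?_
  · rw [coe_range, Set.mem_Iio] at hj hl
    rw [hf j hj, hf l hl, Fin.val_inj, σ.injective.eq_iff] at hjl
    exact congrArg Fin.val hjl
  · rw [hf _ (by omega), hf _ (by omega), ← hσ, ← hσ]
    exact hb i hi

section SharpCond

variable {k : ℕ} {a c : ℕ → ℂ}

theorem SharpCond.congr (h : SharpCond k a) (hc : ∀ n ≤ 2 * k, c n = a n) : SharpCond k c := by
  rintro i hi ⟨p, q, hp, hpq, hq, hs⟩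
  rw [hc p (by omega), hc q hq] at hs
  obtain ⟨hmin₀, hmin⟩ := h i hi ⟨p, q, hp, hpq, hq, hs⟩
  rw [hc (2 * i) (by omega), hc (2 * i + 1) (by omega)]
  refine ⟨hmin₀, fun p q hp hpq hq hs ↦ ?_⟩
  rw [hc p (by omega), hc q hq] at hs ⊢
  exact hmin p q hp hpq hq hs

theorem SharpCond.sumIsNonnegInt_of_partners (hc : SharpCond k c) {i x y : ℕ} (hi : i < k)
    (hx : 2 * i + 1 < x) (hy : 2 * i + 1 < y) (hxy : x ≠ y) (hxk : x ≤ 2 * k + 1)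
    (hyk : y ≤ 2 * k + 1) (hsx : SumIsNonnegInt c (2 * i) x)
    (hsy : SumIsNonnegInt c (2 * i + 1) y) : SumIsNonnegInt c x y := by
  have hmin p q h₁ h₂ h₃ h := (hc i hi ⟨p, q, h₁, h₂, h₃, h⟩).2 p q h₁ h₂ h₃ h
  rw [SumIsNonnegInt] at hsx hsy ⊢
  rcases Nat.lt_or_ge x (2 * k + 1) with hx' | hx'
  · convert (hmin (2 * i) x (by omega) (by omega) (by omega) hsx).add_s14 hsy using 1
    ring
  · convert hsx.add_s14 (hmin (2 * i + 1) y (by omega) (by omega) (by omega) hsy) using 1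
    ring

theorem SharpCond.pairable_Ico_add_two (hc : SharpCond k c) {i : ℕ} (hi : i < k)
    (h : Pairable (SumIsNonnegInt c) (Ico (2 * i) (2 * k + 2))) :
    Pairable (SumIsNonnegInt c) (Ico (2 * i + 2) (2 * k + 2)) := by
  obtain ⟨x, hx, hx₀, hsx, hrest⟩ := h.exists_partner (p := 2 * i) (mem_Ico.2 ⟨le_rfl, by omega⟩)
  by_cases hx₁ : x = 2 * i + 1
  · subst hx₁
    convert hrest using 1
    ext n
    simp only [mem_Ico, mem_erase]
    omega
  obtain ⟨y, hy, hy₁, hsy, hrest'⟩ := hrest.exists_partner (p := 2 * i + 1) (by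
    simp only [mem_Ico, mem_erase]
    omega)
  simp only [mem_Ico, mem_erase] at hx hy
  convert hrest'.insert_pair (p := x) (q := y) (by simp) (by simp) (by omega)
    (hc.sumIsNonnegInt_of_partners hi (by omega) (by omega) (by omega) (by omega) (by omega)
      hsx hsy) using 1
  ext n
  simp only [mem_Ico, mem_erase, mem_insert]
  omega

end SharpCond

theorem augment_half_special_bound_general (k : ℕ) (a b : ℕ → ℂ)
    (hcond : SharpCond k a)
    (hperm : PermOf (2*k+2) b (fun n => if n = 2*k+1 then (1/2 : ℂ) else a n))
    (hpb : ∀ i < k+1, IsNonnegInt (b (2*i) + b (2*i+1))) :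
    IsNonnegInt (a (2*k) + 1/2) := by
  set c : ℕ → ℂ := fun n ↦ if n = 2 * k + 1 then 1 / 2 else a n
  have hc : SharpCond k c := hcond.congr fun n hn ↦ if_neg (by omega)
  have hpairable (i : ℕ) (hi : i ≤ k) : Pairable (SumIsNonnegInt c) (Ico (2 * i) (2 * k + 2)) := by
    induction i with
    | zero =>
      rw [mul_zero, Nat.Ico_zero_eq_range]
      exact hperm.pairable_range (n := k + 1) (r := fun x y ↦ IsNonnegInt (x + y)) hpb
    | succ i ih => exact hc.pairable_Ico_add_two (by omega) (ih (by omega))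
  obtain ⟨q, hq, hq₀, hsum, -⟩ :=
    (hpairable k le_rfl).exists_partner (p := 2 * k) (mem_Ico.2 ⟨le_rfl, by omega⟩)
  obtain rfl : q = 2 * k + 1 := by rw [mem_Ico] at hq; omega
  simpa [SumIsNonnegInt, c] using hsum

/-- If the list (a₁,…,a_{2k+1},½) admits a re-indexing with nonnegative pair sums,
then a_{2k+1} + ½ ∈ ℤ_{≥0}. -/
theorem augment_half_special_bound (k : ℕ) (a b : ℕ → ℂ)
    (hpa : ∀ i < k, IsNonnegInt (a (2*i) + a (2*i+1)))
    (hcond : SharpCond k a)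
    (hperm : PermOf (2*k+2) b (fun n => if n = 2*k+1 then (1/2 : ℂ) else a n))
    (hpb : ∀ i < k+1, IsNonnegInt (b (2*i) + b (2*i+1))) :
    IsNonnegInt (a (2*k) + 1/2) :=
  augment_half_special_bound_general k a b hcond hperm hpb
end
end
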